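/- In the Artin group A(3,3,3) = ⟨s, t, r | sts = tst, trt = rtr, srs = rsr⟩, for every integer k, one has (t^k s t r)(t^{-k} s t r)(s t r s t r)^{-1} = t^k s r^{-k} s^{-1}. -/

import Mathlib

namespace A333

/-- The defining relations of the Artin group
`A(3,3,3) = ⟨s, t, r | sts = tst, trt = rtr, srs = rsr⟩`,
with `0, 1, 2` playing the roles of `s, t, r`. -/
def rels : Set (FreeGroup (Fin 3)) :=
  { FreeGroup.of 0 * FreeGroup.of 1 * FreeGroup.of 0 *
      (FreeGroup.of 1 * FreeGroup.of 0 * FreeGroup.of 1)⁻¹,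
    FreeGroup.of 1 * FreeGroup.of 2 * FreeGroup.of 1 *
      (FreeGroup.of 2 * FreeGroup.of 1 * FreeGroup.of 2)⁻¹,
    FreeGroup.of 0 * FreeGroup.of 2 * FreeGroup.of 0 *
      (FreeGroup.of 2 * FreeGroup.of 0 * FreeGroup.of 2)⁻¹ }

/-- The Artin group `A(3,3,3)`. -/
abbrev Grp := PresentedGroup rels

def s : Grp := PresentedGroup.of 0
def t : Grp := PresentedGroup.of 1
def r : Grp := PresentedGroup.of 2

open FreeGroup in
theorem t_mul_r_mul_t : t * r * t = r * t * r :=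
  PresentedGroup.mk_eq_mk_of_mul_inv_mem (x := of 1 * of 2 * of 1) (y := of 2 * of 1 * of 2)
    (by simp [rels])

end A333

theorem semiconjBy_mul_of_braid {M : Type*} [Monoid M] {a b : M} (h : a * b * a = b * a * b) :
    SemiconjBy (a * b) a b := by
  simpa only [SemiconjBy, mul_assoc] using h

open A333 in
/-- In `A(3,3,3)`, for every integer `k`,
`(t^k str)(t^{-k} str)(strstr)⁻¹ = t^k s r^{-k} s⁻¹`. -/
theorem A333_klein_identity (k : ℤ) :
    (t ^ k * s * t * r) * (t ^ (-k) * s * t * r) * (s * t * r * s * t * r)⁻¹ =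
      t ^ k * s * r ^ (-k) * s⁻¹ := by
  have hconj : SemiconjBy (t * r) (t ^ (-k)) (r ^ (-k)) :=
    (semiconjBy_mul_of_braid t_mul_r_mul_t).zpow_right (-k)
  calc (t ^ k * s * t * r) * (t ^ (-k) * s * t * r) * (s * t * r * s * t * r)⁻¹
      = t ^ k * s * ((t * r) * t ^ (-k) * (t * r)⁻¹) * s⁻¹ := by group
    _ = t ^ k * s * r ^ (-k) * s⁻¹ := by rw [hconj.eq, mul_inv_cancel_right]
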